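/- arXiv:2102.07823 — 12 statements merged into one kernel-verified Lean document; each statement's English description precedes it below -/
import Mathlib

section
/- A commutative ring R is quasi-local (has a unique maximal ideal) if and only if every proper principal ideal of R is a weakly J-ideal. -/
def IsWeaklyJIdeal {R : Type*} [CommRing R] (I : Ideal R) : Prop :=
  I ≠ ⊤ ∧ ∀ a b : R, a * b ∈ I → a * b ≠ 0 → a ∉ Ideal.jacobson (⊥ : Ideal R) → b ∈ I

def IsJIdeal {R : Type*} [CommRing R] (I : Ideal R) : Prop :=
  I ≠ ⊤ ∧ ∀ a b : R, a * b ∈ I → a ∉ Ideal.jacobson (⊥ : Ideal R) → b ∈ I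

/-!
In a quasi-local ring the Jacobson radical is the maximal ideal, so an element outside it is a
unit and can be cancelled: every proper ideal is even a J-ideal. Conversely, if `(a)` is a
proper weakly J-ideal and `a ∉ J(R)`, then `a ≠ 0` and `a * 1 ∈ (a)` force `1 ∈ (a)`, which is
absurd; so every non-unit lies in `J(R)`, i.e. the non-units form an ideal.
-/

open Ideal

section

variable {R : Type*} [CommRing R]

theorem IsJIdeal.isWeaklyJIdeal {I : Ideal R} (h : IsJIdeal I) : IsWeaklyJIdeal I :=
  ⟨h.1, fun a b hab _ ha => h.2 a b hab ha⟩

theorem IsLocalRing.isJIdeal [IsLocalRing R] {I : Ideal R} (hI : I ≠ ⊤) : IsJIdeal I := by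
  refine ⟨hI, fun a b hab ha => ?_⟩
  rw [IsLocalRing.jacobson_eq_maximalIdeal ⊥ bot_ne_top, IsLocalRing.mem_maximalIdeal,
    mem_nonunits_iff, not_not] at ha
  obtain ⟨u, rfl⟩ := ha
  simpa using I.mul_mem_left (↑u⁻¹) hab

theorem mem_jacobson_bot_of_isWeaklyJIdeal_span_singleton {a : R} (ha : ¬IsUnit a)
    (h : IsWeaklyJIdeal (span {a})) : a ∈ jacobson ⊥ := by
  by_contra haJ
  have ha0 : a ≠ 0 := fun h0 => haJ (h0 ▸ zero_mem _)
  have hone : (1 : R) ∈ span {a} :=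
    h.2 a 1 (by simp) (by simpa using ha0) haJ
  exact ha (span_singleton_eq_top.mp ((eq_top_iff_one _).mpr hone))

theorem IsLocalRing.of_forall_not_isUnit_mem_jacobson_bot [Nontrivial R]
    (h : ∀ a : R, ¬IsUnit a → a ∈ jacobson ⊥) : IsLocalRing R :=
  of_isUnit_or_isUnit_one_sub_self fun a => or_iff_not_imp_left.2 fun ha => by
    simpa [sub_eq_neg_add] using mem_jacobson_bot.1 (h a ha) (-1)

end

theorem stmt1 {R : Type*} [CommRing R] [Nontrivial R] :
    (∃! M : Ideal R, M.IsMaximal) ↔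
      ∀ a : R, Ideal.span {a} ≠ ⊤ → IsWeaklyJIdeal (Ideal.span {a}) := by
  constructor
  · intro h a ha
    have := IsLocalRing.of_unique_max_ideal h
    exact (IsLocalRing.isJIdeal ha).isWeaklyJIdeal
  · intro h
    have := IsLocalRing.of_forall_not_isUnit_mem_jacobson_bot fun a ha =>
      mem_jacobson_bot_of_isWeaklyJIdeal_span_singleton ha (h a (by rwa [Ne, span_singleton_eq_top]))
    exact IsLocalRing.maximal_ideal_unique R
end

section
/- If I is a weakly J-ideal of a commutative ring R, then I ⊆ J(R). -/
theorem stmt2 {R : Type*} [CommRing R] (I : Ideal R) (h : IsWeaklyJIdeal I) :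
    I ≤ Ideal.jacobson (⊥ : Ideal R) := by
  intro x hx
  by_contra hxJ
  have hx0 : x ≠ 0 := fun hx0 => hxJ (hx0 ▸ Submodule.zero_mem _)
  have one_mem : (1 : R) ∈ I := h.2 x 1 (by rwa [mul_one]) (by rwa [mul_one]) hxJ
  exact h.1 ((Ideal.eq_top_iff_one I).2 one_mem)
end

section
/- In a semiprimitive commutative ring (i.e., a ring with zero Jacobson radical), the zero ideal is the only weakly J-ideal. -/
section

variable {R : Type*} [CommRing R]

theorem isWeaklyJIdeal_bot [Nontrivial R] : IsWeaklyJIdeal (⊥ : Ideal R) :=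
  ⟨bot_ne_top, fun _ _ hab hab0 _ => absurd (Ideal.mem_bot.mp hab) hab0⟩

theorem IsWeaklyJIdeal.le_jacobson_bot {I : Ideal R} (hI : IsWeaklyJIdeal I) :
    I ≤ Ideal.jacobson ⊥ := by
  intro x hx
  by_contra hxJ
  have hx0 : x ≠ 0 := fun h => hxJ (h ▸ Ideal.zero_mem _)
  have hone : (1 : R) ∈ I := hI.2 x 1 (by rwa [mul_one]) (by rwa [mul_one]) hxJ
  exact hI.1 ((Ideal.eq_top_iff_one I).mpr hone)

end

theorem stmt3 {R : Type*} [CommRing R] [Nontrivial R]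
    (hsp : Ideal.jacobson (⊥ : Ideal R) = ⊥) (I : Ideal R) :
    IsWeaklyJIdeal I ↔ I = ⊥ := by
  refine ⟨fun hI => le_bot_iff.mp ?_, fun hI => hI ▸ isWeaklyJIdeal_bot⟩
  exact hsp ▸ hI.le_jacobson_bot
end

section
/- If I is a weakly J-ideal of a commutative ring R that is not a J-ideal, then I² = 0. -/
/-!
A weakly J-ideal that is not a J-ideal has a witness of failure: `a * b = 0` with `a ∉ J(R)`
and `b ∉ I`. Perturbing `a` and `b` by elements `i, j ∈ I ⊆ J(R)` keeps `a + i` outside `J(R)`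
and `b + j` outside `I`, so the weak J-property forces `(a + i) * (b + j) = 0`. Taking `i = 0`,
then `j = 0`, and finally both nonzero shows successively `a * I = 0`, `I * b = 0` and `I * I = 0`.
-/

open Ideal

namespace IsWeaklyJIdeal

variable {R : Type*} [CommRing R] {I : Ideal R}

theorem le_jacobson (h : IsWeaklyJIdeal I) : I ≤ jacobson ⊥ := by
  intro x hx
  by_contra hxJ
  have hx0 : x ≠ 0 := by rintro rfl; exact hxJ (zero_mem _)
  have h1 : (1 : R) ∈ I := h.2 x 1 (by simpa using hx) (by simpa using hx0) hxJ
  exact h.1 ((eq_top_iff_one I).mpr h1)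

theorem exists_mul_eq_zero_of_not_isJIdeal (h : IsWeaklyJIdeal I) (hn : ¬ IsJIdeal I) :
    ∃ a b : R, a * b = 0 ∧ a ∉ jacobson ⊥ ∧ b ∉ I := by
  by_contra! hall
  exact hn ⟨h.1, fun a b hab ha => by
    by_cases hab0 : a * b = 0
    · exact hall a b hab0 ha
    · exact h.2 a b hab hab0 ha⟩

theorem add_mul_add_eq_zero (h : IsWeaklyJIdeal I) {a b : R} (ha : a ∉ jacobson ⊥) (hb : b ∉ I)
    {i j : R} (hi : i ∈ I) (hj : j ∈ I) (hmem : (a + i) * (b + j) ∈ I) :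
    (a + i) * (b + j) = 0 := by
  by_contra hne
  have hai : a + i ∉ jacobson ⊥ := by
    rwa [Submodule.add_mem_iff_left _ (h.le_jacobson hi)]
  exact hb ((Submodule.add_mem_iff_left _ hj).mp (h.2 _ _ hmem hne hai))

theorem mul_eq_zero_of_mem_right (h : IsWeaklyJIdeal I) {a b : R} (hab : a * b = 0)
    (ha : a ∉ jacobson ⊥) (hb : b ∉ I) {j : R} (hj : j ∈ I) : a * j = 0 := by
  have key : (a + 0) * (b + j) = a * j := by rw [add_zero, mul_add, hab, zero_add]
  rw [← key]
  exact h.add_mul_add_eq_zero ha hb (zero_mem I) hj (key ▸ I.mul_mem_left a hj)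

theorem mul_eq_zero_of_mem_left (h : IsWeaklyJIdeal I) {a b : R} (hab : a * b = 0)
    (ha : a ∉ jacobson ⊥) (hb : b ∉ I) {i : R} (hi : i ∈ I) : i * b = 0 := by
  have key : (a + i) * (b + 0) = i * b := by rw [add_zero, add_mul, hab, zero_add]
  rw [← key]
  exact h.add_mul_add_eq_zero ha hb hi (zero_mem I) (key ▸ I.mul_mem_right b hi)

theorem mul_eq_zero_of_mem (h : IsWeaklyJIdeal I) {a b : R} (hab : a * b = 0)
    (ha : a ∉ jacobson ⊥) (hb : b ∉ I) {i j : R} (hi : i ∈ I) (hj : j ∈ I) : i * j = 0 := by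
  have key : (a + i) * (b + j) = i * j := by
    linear_combination hab + h.mul_eq_zero_of_mem_right hab ha hb hj
      + h.mul_eq_zero_of_mem_left hab ha hb hi
  rw [← key]
  exact h.add_mul_add_eq_zero ha hb hi hj (key ▸ I.mul_mem_right j hi)

end IsWeaklyJIdeal

theorem stmt4 {R : Type*} [CommRing R] (I : Ideal R)
    (h : IsWeaklyJIdeal I) (hn : ¬ IsJIdeal I) : I ^ 2 = ⊥ := by
  obtain ⟨a, b, hab, ha, hb⟩ := h.exists_mul_eq_zero_of_not_isJIdeal hn
  rw [sq, eq_bot_iff, mul_le]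
  intro i hi j hj
  exact (Submodule.mem_bot R).mpr (h.mul_eq_zero_of_mem hab ha hb hi hj)
end

section
/- A proper ideal I of a commutative ring R is a weakly J-ideal if and only if for every a ∈ R \ J(R), the colon ideal (I : a) equals I ∪ (0 : a). -/
namespace Ideal

variable {R : Type*} [Semiring R]

theorem union_annihilator_subset_colon (I : Ideal R) (a : R) :
    (I : Set R) ∪ {x : R | a * x = 0} ⊆ {x : R | a * x ∈ I} := by
  rintro x (hx | hx)
  · exact I.mul_mem_left a hx
  · change a * x = 0 at hx
    change a * x ∈ I
    rw [hx]
    exact I.zero_mem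

theorem colon_eq_union_annihilator_iff (I : Ideal R) (a : R) :
    {x : R | a * x ∈ I} = (I : Set R) ∪ {x : R | a * x = 0} ↔
      ∀ b : R, a * b ∈ I → a * b ≠ 0 → b ∈ I := by
  constructor
  · intro h b hab hab0
    have hb : b ∈ (I : Set R) ∪ {x : R | a * x = 0} := h ▸ hab
    exact hb.resolve_right hab0
  · intro h
    refine Set.Subset.antisymm ?_ (union_annihilator_subset_colon I a)
    intro b hab
    by_cases hab0 : a * b = 0
    · exact Or.inr hab0
    · exact Or.inl (h b hab hab0)

end Ideal

theorem stmt7 {R : Type*} [CommRing R] (I : Ideal R) (hI : I ≠ ⊤) :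
    IsWeaklyJIdeal I ↔
      ∀ a : R, a ∉ Ideal.jacobson (⊥ : Ideal R) →
        {x : R | a * x ∈ I} = (I : Set R) ∪ {x : R | a * x = 0} := by
  simp only [Ideal.colon_eq_union_annihilator_iff]
  unfold IsWeaklyJIdeal
  constructor
  · rintro ⟨-, h⟩ a ha b hab hab0
    exact h a b hab hab0 ha
  · intro h
    exact ⟨hI, fun a b hab hab0 ha => h a ha b hab hab0⟩
end

section
/- A proper ideal I of a commutative ring R is a weakly J-ideal if and only if for all ideals K, L of R with 0 ≠ KL ⊆ I (i.e., KL ⊆ I and KL ≠ 0), either K ⊆ J(R) or L ⊆ I. -/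
/-! If `0 ≠ KL ⊆ I` with `K ⊄ J(R)`, some `u ∈ K \ J(R)` has `uL ≠ 0`: when a chosen `a ∈ K \ J(R)`
kills `L`, take `u = x` or `u = a + x` for any `x ∈ K` with `xL ≠ 0`. For such `u` and `c ∈ L` with
`uc ≠ 0`, every `b ∈ L` lies in `I`: directly if `ub ≠ 0`, and otherwise because
`u(b + c) = uc ≠ 0` puts both `b + c` and `c` in `I`. -/

namespace Ideal

variable {R : Type*} [CommRing R]

theorem exists_mul_ne_zero_of_mul_ne_bot {K L : Ideal R} (h : K * L ≠ ⊥) :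
    ∃ x ∈ K, ∃ c ∈ L, x * c ≠ 0 := by
  by_contra! hzero
  exact h (eq_bot_iff.mpr (mul_le.mpr fun x hx c hc => (mem_bot.mpr (hzero x hx c hc))))

theorem exists_notMem_mul_ne_zero_of_not_le {N K L : Ideal R} (hK : ¬K ≤ N) (hKL : K * L ≠ ⊥) :
    ∃ u ∈ K, u ∉ N ∧ ∃ c ∈ L, u * c ≠ 0 := by
  obtain ⟨a, haK, haN⟩ := SetLike.not_le_iff_exists.mp hK
  by_cases ha : ∃ c ∈ L, a * c ≠ 0
  · exact ⟨a, haK, haN, ha⟩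
  push Not at ha
  obtain ⟨x, hxK, c, hcL, hxc⟩ := exists_mul_ne_zero_of_mul_ne_bot hKL
  by_cases hxN : x ∈ N
  · refine ⟨a + x, add_mem haK hxK, fun h => haN ?_, c, hcL, ?_⟩
    · simpa using sub_mem h hxN
    · rwa [add_mul, ha c hcL, zero_add]
  · exact ⟨x, hxK, hxN, c, hcL, hxc⟩

end Ideal

theorem IsWeaklyJIdeal.le_of_mul_mem {R : Type*} [CommRing R] {I L : Ideal R}
    (hI : IsWeaklyJIdeal I) {u c : R} (hu : u ∉ Ideal.jacobson (⊥ : Ideal R))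
    (huL : ∀ b ∈ L, u * b ∈ I) (hc : c ∈ L) (huc : u * c ≠ 0) : L ≤ I := by
  have hcI : c ∈ I := hI.2 u c (huL c hc) huc hu
  intro b hb
  by_cases hub : u * b = 0
  · have hbc : b + c ∈ I := by
      refine hI.2 u (b + c) (huL _ (add_mem hb hc)) ?_ hu
      rwa [mul_add, hub, zero_add]
    simpa using sub_mem hbc hcI
  · exact hI.2 u b (huL b hb) hub hu

theorem stmt8 {R : Type*} [CommRing R] (I : Ideal R) (hI : I ≠ ⊤) :
    IsWeaklyJIdeal I ↔
      ∀ K L : Ideal R, K * L ≤ I → K * L ≠ ⊥ →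
        K ≤ Ideal.jacobson (⊥ : Ideal R) ∨ L ≤ I := by
  constructor
  · intro hweak K L hKL hne
    refine or_iff_not_imp_left.mpr fun hK => ?_
    obtain ⟨u, huK, huJ, c, hcL, huc⟩ := Ideal.exists_notMem_mul_ne_zero_of_not_le hK hne
    exact hweak.le_of_mul_mem huJ (fun b hb => hKL (Ideal.mul_mem_mul huK hb)) hcL huc
  · intro h
    refine ⟨hI, fun a b hab hab0 haJ => ?_⟩
    have hspan : Ideal.span {a} * Ideal.span {b} = Ideal.span {a * b} :=
      Ideal.span_singleton_mul_span_singleton a b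
    rcases h (Ideal.span {a}) (Ideal.span {b})
        (hspan ▸ (Ideal.span_singleton_le_iff_mem I).mpr hab)
        (hspan ▸ by simpa [Ideal.span_singleton_eq_bot] using hab0) with hJ | hL
    · exact absurd (hJ (Ideal.mem_span_singleton_self a)) haJ
    · exact hL (Ideal.mem_span_singleton_self b)
end

section
/- Let S be a non-empty subset of a commutative ring R with S ⊄ I. If I and the annihilator (0 : S) are both weakly J-ideals of R, then the colon ideal (I : S) is a weakly J-ideal of R. -/
namespace IsWeaklyJIdeal

variable {R : Type*} [CommRing R] {I : Ideal R}

/-- An `x ∈ N` with `a b x = 0` is handled through `x + t`, where `t ∈ N` is a witness of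
`a b ∉ (0 : N)`: then `a b (x + t) = a b t ≠ 0`. -/
theorem mem_colon_of_mul_mem_colon (hI : IsWeaklyJIdeal I) {a b : R}
    (ha : a ∉ Ideal.jacobson (⊥ : Ideal R)) {N : Ideal R}
    (hab : a * b ∈ I.colon (N : Set R)) (hab0 : a * b ∉ (⊥ : Ideal R).colon (N : Set R)) :
    b ∈ I.colon (N : Set R) := by
  simp only [Submodule.mem_colon, Submodule.mem_bot, smul_eq_mul, not_forall] at hab hab0 ⊢
  obtain ⟨t, ht, habt⟩ := hab0
  have mem_of_ne_zero : ∀ x ∈ N, a * b * x ≠ 0 → b * x ∈ I := fun x hx habx ↦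
    hI.2 a _ (mul_assoc a b x ▸ hab x hx) (mul_assoc a b x ▸ habx) ha
  intro x hx
  by_cases habx : a * b * x = 0
  · have hxt : b * (x + t) ∈ I :=
      mem_of_ne_zero _ (N.add_mem hx ht) (by rwa [mul_add, habx, zero_add])
    simpa [mul_add] using I.sub_mem hxt (mem_of_ne_zero t ht habt)
  · exact mem_of_ne_zero x hx habx

end IsWeaklyJIdeal

theorem stmt9_general {R : Type*} [CommRing R] (I : Ideal R) (S : Set R)
    (hS : ¬ S ⊆ (I : Set R))
    (hI : IsWeaklyJIdeal I)
    (hAnn : IsWeaklyJIdeal (Submodule.colon (⊥ : Ideal R) (Ideal.span S))) :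
    IsWeaklyJIdeal (Submodule.colon I (Ideal.span S)) := by
  refine ⟨fun h ↦ hS (Ideal.span_le.1 ((Submodule.colon_eq_top_iff_subset _).1 h)),
    fun a b hab hab0 ha ↦ ?_⟩
  by_cases hann : a * b ∈ (⊥ : Ideal R).colon (Ideal.span S)
  · exact Submodule.colon_mono bot_le subset_rfl (hAnn.2 a b hann hab0 ha)
  · exact hI.mem_colon_of_mul_mem_colon ha hab hann

theorem stmt9 {R : Type*} [CommRing R] (I : Ideal R) (S : Set R)
    (hne : S.Nonempty) (hS : ¬ S ⊆ (I : Set R))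
    (hI : IsWeaklyJIdeal I)
    (hAnn : IsWeaklyJIdeal (Submodule.colon (⊥ : Ideal R) (Ideal.span S))) :
    IsWeaklyJIdeal (Submodule.colon I (Ideal.span S)) :=
  stmt9_general I S hS hI hAnn
end

section
/- If I is a weakly prime ideal of a commutative ring R and I ⊆ J(R), then I is a weakly J-ideal of R. -/
theorem stmt10 {R : Type*} [CommRing R] (I : Ideal R) (hI : I ≠ ⊤)
    (hwp : ∀ a b : R, a * b ∈ I → a * b ≠ 0 → a ∈ I ∨ b ∈ I)
    (hJ : I ≤ Ideal.jacobson (⊥ : Ideal R)) :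
    IsWeaklyJIdeal I :=
  ⟨hI, fun a b hab hne ha => (hwp a b hab hne).resolve_left fun haI => ha (hJ haI)⟩
end

section
/- Let f : R₁ → R₂ be a surjective ring homomorphism and I₁ a weakly J-ideal of R₁ with ker(f) ⊆ I₁. Then f(I₁) is a weakly J-ideal of R₂. -/
namespace Ideal

variable {R S : Type*} [CommRing R] [CommRing S] {f : R →+* S}

theorem comap_map_of_surjective_of_ker_le (hf : Function.Surjective f) {I : Ideal R}
    (hker : RingHom.ker f ≤ I) : (I.map f).comap f = I := by
  rw [comap_map_of_surjective' f hf, sup_eq_left.mpr hker]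

theorem map_mem_jacobson_bot_of_surjective (hf : Function.Surjective f) {x : R}
    (hx : x ∈ jacobson (⊥ : Ideal R)) : f x ∈ jacobson (⊥ : Ideal S) := by
  rw [mem_jacobson_bot] at hx ⊢
  intro z
  obtain ⟨w, rfl⟩ := hf z
  simpa using (hx w).map f

end Ideal

theorem stmt14 {R₁ R₂ : Type*} [CommRing R₁] [CommRing R₂]
    (f : R₁ →+* R₂) (hf : Function.Surjective f)
    (I₁ : Ideal R₁) (h : IsWeaklyJIdeal I₁) (hker : RingHom.ker f ≤ I₁) :
    IsWeaklyJIdeal (I₁.map f) := by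
  have hcomap := Ideal.comap_map_of_surjective_of_ker_le hf hker
  refine ⟨fun htop => h.1 ?_, ?_⟩
  · rw [← hcomap, htop, Ideal.comap_top]
  rintro a b hab hab0 haJ
  obtain ⟨x, rfl⟩ := hf a
  obtain ⟨y, rfl⟩ := hf b
  rw [← map_mul] at hab hab0
  refine Ideal.mem_map_of_mem f (h.2 x y ?_ ?_ ?_)
  · rwa [← hcomap, Ideal.mem_comap]
  · rintro hxy
    exact hab0 (by rw [hxy, map_zero])
  · exact fun hx => haJ (Ideal.map_mem_jacobson_bot_of_surjective hf hx)
end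

section
/- Let K ⊆ I be proper ideals of a commutative ring R. If K is a J-ideal of R and I/K is a weakly J-ideal of R/K, then I is a J-ideal of R. -/
/-! A J-ideal `K` lies in `J(R)`, so `J(R/K)` is the image of `J(R)` and `a ∉ J(R)` gives
`a + K ∉ J(R/K)`. For `ab ∈ I` with `a ∉ J(R)`, either `ab ∈ K` and `K` being a J-ideal gives
`b ∈ K ⊆ I`, or `ab + K` is a nonzero element of `I/K` and `I/K` being weakly J gives `b ∈ I`. -/

namespace Ideal
variable {R : Type*} [CommRing R]

theorem jacobson_eq_jacobson_bot_of_le {K : Ideal R} (hK : K ≤ jacobson ⊥) :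
    K.jacobson = jacobson ⊥ :=
  le_antisymm (by simpa using jacobson_mono hK) (jacobson_mono bot_le)

theorem Quotient.mk_mem_jacobson_bot_iff {K : Ideal R} (hK : K ≤ jacobson ⊥) {a : R} :
    Quotient.mk K a ∈ jacobson (⊥ : Ideal (R ⧸ K)) ↔ a ∈ jacobson ⊥ := by
  rw [← map_quotient_self K, ← map_jacobson_of_surjective Quotient.mk_surjective (by rw [mk_ker]),
    mem_quotient_iff_mem le_jacobson, jacobson_eq_jacobson_bot_of_le hK]

end Ideal

theorem IsJIdeal.le_jacobson_bot {R : Type*} [CommRing R] {K : Ideal R} (hK : IsJIdeal K) :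
    K ≤ Ideal.jacobson ⊥ := by
  intro k hk
  by_contra hkJ
  exact hK.1 ((Ideal.eq_top_iff_one K).mpr (hK.2 k 1 (by simpa using hk) hkJ))

theorem stmt15_general {R : Type*} [CommRing R] (K I : Ideal R) (hKI : K ≤ I)
    (hK : IsJIdeal K)
    (h : IsWeaklyJIdeal (I.map (Ideal.Quotient.mk K))) :
    IsJIdeal I := by
  refine ⟨fun hI ↦ h.1 (by rw [hI, Ideal.map_top]), fun a b hab ha ↦ ?_⟩
  by_cases habK : a * b ∈ K
  · exact hKI (hK.2 a b habK ha)
  rw [← Ideal.mem_quotient_iff_mem hKI] at hab ⊢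
  refine h.2 _ _ (by rwa [← map_mul]) ?_ ?_
  · rwa [← map_mul, Ne, Ideal.Quotient.eq_zero_iff_mem]
  · rwa [Ideal.Quotient.mk_mem_jacobson_bot_iff hK.le_jacobson_bot]

theorem stmt15 {R : Type*} [CommRing R] (K I : Ideal R) (hKI : K ≤ I)
    (hI : I ≠ ⊤) (hK : IsJIdeal K)
    (h : IsWeaklyJIdeal (I.map (Ideal.Quotient.mk K))) :
    IsJIdeal I :=
  stmt15_general K I hKI hK h
end

section
/- Every weakly J-ideal of a presimplifiable commutative ring is a J-ideal. -/
theorem eq_zero_of_mul_eq_zero_of_notMem_jacobson_bot {R : Type*} [CommRing R]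
    (hp : ∀ a b : R, a = a * b → a = 0 ∨ IsUnit b) {a b : R}
    (ha : a ∉ Ideal.jacobson (⊥ : Ideal R)) (hab : a * b = 0) : b = 0 := by
  obtain ⟨y, hy⟩ := not_forall.mp (Ideal.mem_jacobson_bot.not.mp ha)
  have hb : b = b * (a * y + 1) := by linear_combination (-y) * hab
  exact (hp b _ hb).resolve_right hy

theorem IsWeaklyJIdeal.isJIdeal {R : Type*} [CommRing R] {I : Ideal R} (h : IsWeaklyJIdeal I)
    (hJ : ∀ a b : R, a ∉ Ideal.jacobson (⊥ : Ideal R) → a * b = 0 → b = 0) : IsJIdeal I := by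
  refine ⟨h.1, fun a b hab ha => ?_⟩
  by_cases hz : a * b = 0
  · rw [hJ a b ha hz]
    exact I.zero_mem
  · exact h.2 a b hab hz ha

theorem stmt16 {R : Type*} [CommRing R]
    (hp : ∀ a b : R, a = a * b → a = 0 ∨ IsUnit b)
    (I : Ideal R) (h : IsWeaklyJIdeal I) : IsJIdeal I :=
  h.isJIdeal fun _ _ ha hab => eq_zero_of_mul_eq_zero_of_notMem_jacobson_bot hp ha hab
end

section
/- Let M be a module over a commutative ring R, and let I be an ideal of R and N a submodule of M with IM ⊆ N. If the ideal I(+)N of the idealization ring R(+)M is a weakly J-ideal, then I is a weakly J-ideal of R. -/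
theorem IsWeaklyJIdeal.comap {R S : Type*} [CommRing R] [CommRing S] {f : R →+* S}
    (hf : Function.Injective f)
    (hJ : ∀ a, f a ∈ Ideal.jacobson (⊥ : Ideal S) → a ∈ Ideal.jacobson (⊥ : Ideal R))
    {P : Ideal S} (hP : IsWeaklyJIdeal P) : IsWeaklyJIdeal (P.comap f) := by
  obtain ⟨hPtop, hPweak⟩ := hP
  refine ⟨Ideal.comap_ne_top f hPtop, fun a b hab hab0 haJ => ?_⟩
  have hfab : f a * f b ∈ P := by simpa using hab
  have hfab0 : f a * f b ≠ 0 := by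
    rw [← map_mul, ne_eq, map_eq_zero_iff f hf]
    exact hab0
  exact hPweak _ _ hfab hfab0 (mt (hJ a) haJ)

namespace TrivSqZeroExt

theorem inl_mem_jacobson_bot_iff {R M : Type*} [CommRing R] [AddCommGroup M] [Module R M]
    [Module Rᵐᵒᵖ M] [IsCentralScalar R M] {r : R} :
    (inl r : TrivSqZeroExt R M) ∈ Ideal.jacobson ⊥ ↔ r ∈ Ideal.jacobson ⊥ := by
  simp only [Ideal.mem_jacobson_bot, isUnit_iff_isUnit_fst, fst_add, fst_mul, fst_inl, fst_one]
  exact ⟨fun h y => h (inl y), fun h y => h y.fst⟩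

end TrivSqZeroExt

theorem stmt19_general {R : Type*} [CommRing R] {M : Type*} [AddCommGroup M] [Module R M]
    [Module Rᵐᵒᵖ M] [IsCentralScalar R M]
    (I : Ideal R) (N : Submodule R M)
    (P : Ideal (TrivSqZeroExt R M))
    (hP : ∀ x : TrivSqZeroExt R M, x ∈ P ↔ x.fst ∈ I ∧ x.snd ∈ N)
    (h : IsWeaklyJIdeal P) : IsWeaklyJIdeal I := by
  have hI : P.comap (TrivSqZeroExt.inlHom R M) = I := by
    ext r
    rw [Ideal.mem_comap, TrivSqZeroExt.inlHom_apply, hP, TrivSqZeroExt.fst_inl,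
      TrivSqZeroExt.snd_inl]
    exact and_iff_left N.zero_mem
  rw [← hI]
  exact h.comap (f := TrivSqZeroExt.inlHom R M) TrivSqZeroExt.inl_injective
    fun _ => TrivSqZeroExt.inl_mem_jacobson_bot_iff.mp

theorem stmt19 {R : Type*} [CommRing R] {M : Type*} [AddCommGroup M] [Module R M]
    [Module Rᵐᵒᵖ M] [IsCentralScalar R M]
    (I : Ideal R) (N : Submodule R M) (hIM : ∀ r ∈ I, ∀ m : M, r • m ∈ N)
    (P : Ideal (TrivSqZeroExt R M))
    (hP : ∀ x : TrivSqZeroExt R M, x ∈ P ↔ x.fst ∈ I ∧ x.snd ∈ N)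
    (h : IsWeaklyJIdeal P) : IsWeaklyJIdeal I :=
  stmt19_general I N P hP h
end
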